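/- arXiv:2602.19879 — 4 statements merged into one kernel-verified Lean document; each statement's English description precedes it below -/
import Mathlib

section
/- In the relative greedy analysis, OPT ≤ TMST·(1 − ∫_0^{1/2} ρ(γ) dγ), where ρ(γ) = (1/TMST)·Σ_{i ≤ j(γ)} drop_{G_i}(X_i), j(γ) is the last index i with c(K_i)/drop_{G_i}(X_i) < 1 − γ, and OPT is the cost of an optimal Steiner tree. -/
open scoped Classical

/-- The minimum cost of a spanning tree of the complete graph on `R`
with respect to the edge costs `u`. -/
noncomputable def mstCost {R : Type*} (u : Sym2 R → ℝ) : ℝ :=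
  sInf {w : ℝ | ∃ T : Finset (Sym2 R), (∀ e ∈ T, ¬ e.IsDiag) ∧
    (SimpleGraph.fromEdgeSet (↑T : Set (Sym2 R))).Connected ∧
    T.card + 1 = Nat.card R ∧ w = ∑ e ∈ T, u e}
/-- Shortest-path distance in the weighted graph `(G, c)`, as a function on unordered pairs. -/
noncomputable def wdist {V : Type*} (G : SimpleGraph V) (c : Sym2 V → ℝ) : Sym2 V → ℝ :=
  Sym2.lift ⟨fun x y => sInf {d : ℝ |
      (∃ p : G.Walk x y, d = (p.edges.map c).sum) ∨
      (∃ p : G.Walk y x, d = (p.edges.map c).sum)},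
    fun x y => congrArg sInf (Set.ext fun _ => or_comm)⟩

/-- The metric closure of `(G, c)` restricted to a terminal set `R`. -/
noncomputable def restrictDist {V : Type*} (G : SimpleGraph V) (c : Sym2 V → ℝ)
    (R : Finset V) : Sym2 {v : V // v ∈ R} → ℝ :=
  Sym2.lift ⟨fun a b => wdist G c s((a : V), (b : V)), fun a b => by show wdist G c s((a : V), (b : V)) = wdist G c s((b : V), (a : V)); rw [Sym2.eq_swap]⟩
/-- The setoid on `R` identifying all elements of `X` (and nothing else). -/
def contractSetoid {R : Type*} (X : Set R) : Setoid R where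
  r a b := a = b ∨ (a ∈ X ∧ b ∈ X)
  iseqv := ⟨fun _ => Or.inl rfl,
    fun h => h.elim (fun e => Or.inl e.symm) (fun h' => Or.inr ⟨h'.2, h'.1⟩),
    fun h1 h2 => by
      rcases h1 with rfl | ⟨ha, hb⟩
      · exact h2
      · rcases h2 with rfl | ⟨_, hc⟩
        · exact Or.inr ⟨ha, hb⟩
        · exact Or.inr ⟨ha, hc⟩⟩

/-- Edge costs on the quotient of `R` by a setoid `sd`: the minimum of `d`
over all pairs of representatives. -/
noncomputable def quotCost {R : Type*} (d : Sym2 R → ℝ) (sd : Setoid R) :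
    Sym2 (Quotient sd) → ℝ :=
  fun e => sInf {v : ℝ | ∃ a b : R,
    s(Quotient.mk sd a, Quotient.mk sd b) = e ∧ v = d s(a, b)}

/-- `drop(X) = TMST - TMST_{/X}` for the terminal metric `d`. -/
noncomputable def dropCost {R : Type*} (d : Sym2 R → ℝ) (X : Set R) : ℝ :=
  mstCost d - mstCost (quotCost d (contractSetoid X))
/-- The edge set `K` connects the vertex set `X`: all of `X` lies in a single
connected component of the graph with edge set `K`. -/
def ConnectsSet {V : Type*} (K : Set (Sym2 V)) (X : Set V) : Prop :=
  ∀ x ∈ X, ∀ y ∈ X, (SimpleGraph.fromEdgeSet K).Reachable x y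

/-- The minimum cost of a component (edge set of `G`) connecting the vertex set `X`. -/
noncomputable def connCost {V : Type*} (G : SimpleGraph V) (c : Sym2 V → ℝ)
    (X : Set V) : ℝ :=
  sInf {w : ℝ | ∃ K : Finset (Sym2 V), (↑K : Set (Sym2 V)) ⊆ G.edgeSet ∧
    ConnectsSet (↑K : Set (Sym2 V)) X ∧ w = ∑ e ∈ K, c e}
/-- The drop of a terminal set `Y` at a stage of the greedy process: the decrease in
terminal MST cost caused by additionally contracting `Y`, in the instance where the
terminals have already been contracted according to the setoid `sd`. -/
noncomputable def stageDrop {V : Type*} (G : SimpleGraph V) (c : Sym2 V → ℝ)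
    (R : Finset V) (sd : Setoid {v : V // v ∈ R}) (Y : Set {v : V // v ∈ R}) : ℝ :=
  mstCost (quotCost (restrictDist G c R) sd)
    - mstCost (quotCost (restrictDist G c R) (sd ⊔ contractSetoid Y))

/-- The efficiency ratio `c(K) / drop(Y)` of a component `K` for a terminal set `Y`
at the stage given by the setoid `sd`. -/
noncomputable def stageRatio {V : Type*} (G : SimpleGraph V) (c : Sym2 V → ℝ)
    (R : Finset V) (sd : Setoid {v : V // v ∈ R}) (K : Finset (Sym2 V))
    (Y : Set {v : V // v ∈ R}) : ℝ :=
  (∑ e ∈ K, c e) / stageDrop G c R sd Y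

/-!
Contracting the components `K_1, …, K_j` one after another lowers the terminal MST by
`Σ drop_i` in total. A spanning tree of the contracted terminal metric, realized by walks in `G`
between representatives, together with the components connects all terminals, so
`OPT ≤ TMST - Σ drop_i + Σ c(K_i) = TMST - Σ (1 - c(K_i)/drop_i) drop_i`.
Since `∫_0^{1/2} 1[γ < t] dγ = min t (1/2) ≤ t` for `t ≥ 0`, the last sum is at least
`Σ drop_i ∫_0^{1/2} 1[γ < 1 - c(K_i)/drop_i] dγ = TMST ∫_0^{1/2} ρ`.
-/

open SimpleGraph

theorem Fin.sum_univ_castSucc_sub_succ {G : Type*} [AddCommGroup G] {n : ℕ}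
    (f : Fin (n + 1) → G) :
    ∑ i : Fin n, (f i.castSucc - f i.succ) = f 0 - f (Fin.last n) := by
  induction n with
  | zero => simp
  | succ n ih =>
    rw [Fin.sum_univ_castSucc]
    simp only [Fin.succ_castSucc]
    rw [ih (fun i => f i.castSucc)]
    simp only [Fin.castSucc_zero, Fin.succ_last]
    abel

theorem Finset.sum_biUnion_le_sum_sum {ι β N : Type*} [DecidableEq β] [AddCommMonoid N]
    [Preorder N] [AddLeftMono N] {s : Finset ι} {t : ι → Finset β} {f : β → N}
    (hf : ∀ x ∈ s.biUnion t, 0 ≤ f x) :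
    ∑ x ∈ s.biUnion t, f x ≤ ∑ i ∈ s, ∑ x ∈ t i, f x := by
  have hbiUnion : s.biUnion t = (s.sigma t).image Sigma.snd := by ext; simp
  rw [hbiUnion] at hf ⊢
  exact (Finset.sum_image_le_of_nonneg hf).trans_eq (Finset.sum_sigma s t fun x => f x.2)

theorem Finset.sum_union_le_sum_add_sum {β N : Type*} [DecidableEq β] [AddCommMonoid N]
    [PartialOrder N] [IsOrderedAddMonoid N] {s t : Finset β} {f : β → N}
    (hf : ∀ x ∈ s ∩ t, 0 ≤ f x) :
    ∑ x ∈ s ∪ t, f x ≤ ∑ x ∈ s, f x + ∑ x ∈ t, f x := by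
  rw [← Finset.sum_union_inter]
  exact le_add_of_nonneg_right (Finset.sum_nonneg hf)

theorem List.sum_toFinset_le_sum_map {α N : Type*} [DecidableEq α] [AddCommMonoid N]
    [PartialOrder N] [IsOrderedAddMonoid N] {l : List α} {f : α → N} (hf : ∀ x ∈ l, 0 ≤ f x) :
    ∑ x ∈ l.toFinset, f x ≤ (l.map f).sum := by
  rw [Finset.sum_eq_multiset_sum, List.toFinset_val, Multiset.map_coe, Multiset.sum_coe]
  exact ((List.dedup_sublist l).map f).sum_le_sum (by simpa using hf)

theorem Setoid.rel_of_connected_quotient {α : Type*} {s r : Setoid α} (hsr : s ≤ r)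
    {T : SimpleGraph (Quotient s)} (hT : T.Connected)
    (hT_rel : ∀ e ∈ T.edgeSet, ∃ a b, s(⟦a⟧, ⟦b⟧) = e ∧ r a b) (a b : α) : r a b := by
  have hadj : ∀ a b, T.Adj ⟦a⟧ ⟦b⟧ → r a b := by
    intro a b hab
    obtain ⟨a', b', he, hr⟩ := hT_rel _ (T.mem_edgeSet.2 hab)
    rcases Sym2.eq_iff.1 he with ⟨ha, hb⟩ | ⟨ha, hb⟩
    · exact r.trans' (hsr (Quotient.exact ha.symm)) (r.trans' hr (hsr (Quotient.exact hb)))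
    · exact r.trans' (hsr (Quotient.exact hb.symm))
        (r.trans' (r.symm' hr) (hsr (Quotient.exact ha)))
  suffices ∀ {q q' : Quotient s} (p : T.Walk q q') (a b : α), ⟦a⟧ = q → ⟦b⟧ = q' → r a b
    from this (hT.preconnected ⟦a⟧ ⟦b⟧).some a b rfl rfl
  intro q q' p
  induction p with
  | nil => exact fun a b ha hb => hsr (Quotient.exact (ha.trans hb.symm))
  | @cons _ v _ h p ih =>
    rintro a b rfl hb
    obtain ⟨m, rfl⟩ := Quotient.exists_rep v
    exact r.trans' (hadj a m h) (ih m b rfl hb)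

theorem contractSetoid_le {α : Type*} {X : Set α} {r : Setoid α}
    (h : ∀ a ∈ X, ∀ b ∈ X, r a b) : contractSetoid X ≤ r := by
  rintro a b (rfl | ⟨ha, hb⟩)
  exacts [r.refl' a, h a ha b hb]

theorem le_of_contractSetoid_chain {α : Type*} {j : ℕ} {X : Fin j → Set α}
    {sd : Fin (j + 1) → Setoid α} (hs0 : sd 0 = ⊥)
    (hsucc : ∀ i : Fin j, sd i.succ = sd i.castSucc ⊔ contractSetoid (X i)) {r : Setoid α}
    (hX : ∀ i, ∀ a ∈ X i, ∀ b ∈ X i, r a b) (i : Fin (j + 1)) : sd i ≤ r := by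
  induction i using Fin.induction with
  | zero => exact hs0 ▸ bot_le
  | succ i ih => exact hsucc i ▸ sup_le ih (contractSetoid_le (hX i))

theorem reachable_fromEdgeSet_of_walk {V : Type*} {G : SimpleGraph V} {u v : V}
    (p : G.Walk u v) {K : Set (Sym2 V)} (hK : ∀ e ∈ p.edges, e ∈ K) :
    (fromEdgeSet K).Reachable u v :=
  ⟨p.transfer _ fun e he => by
    rw [edgeSet_fromEdgeSet]
    exact ⟨hK e he, G.not_isDiag_of_mem_edgeSet (p.edges_subset_edgeSet he)⟩⟩

def spanningTreeCosts {Q : Type*} (u : Sym2 Q → ℝ) : Set ℝ :=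
  {w : ℝ | ∃ T : Finset (Sym2 Q), (∀ e ∈ T, ¬ e.IsDiag) ∧
    (fromEdgeSet (↑T : Set (Sym2 Q))).Connected ∧
    T.card + 1 = Nat.card Q ∧ w = ∑ e ∈ T, u e}

theorem mstCost_eq_sInf {Q : Type*} (u : Sym2 Q → ℝ) :
    mstCost u = sInf (spanningTreeCosts u) := rfl

theorem spanningTreeCosts_nonempty {Q : Type*} [Fintype Q] [Nonempty Q] (u : Sym2 Q → ℝ) :
    (spanningTreeCosts u).Nonempty := by
  obtain ⟨q₀⟩ := ‹Nonempty Q›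
  let star : Finset (Sym2 Q) := (Finset.univ.erase q₀).image fun q => s(q₀, q)
  have hstar_inj : Set.InjOn (fun q => s(q₀, q)) ↑(Finset.univ.erase q₀) :=
    fun a _ b _ h => (Sym2.congr_right.1 h)
  have hreach : ∀ q, (fromEdgeSet (↑star : Set (Sym2 Q))).Reachable q₀ q := by
    intro q
    rcases eq_or_ne q₀ q with rfl | hq
    · rfl
    · refine Adj.reachable ((fromEdgeSet_adj _).2 ⟨?_, hq⟩)
      exact Finset.mem_image_of_mem _ (Finset.mem_erase.2 ⟨hq.symm, Finset.mem_univ q⟩)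
  refine ⟨_, star, ?_, ⟨fun a b => (hreach a).symm.trans (hreach b)⟩, ?_, rfl⟩
  · simp only [star, Finset.mem_image, Finset.mem_erase]
    rintro _ ⟨q, ⟨hq, -⟩, rfl⟩
    exact fun h => hq (Sym2.mk_isDiag_iff.1 h).symm
  · rw [Finset.card_image_of_injOn hstar_inj, Finset.card_erase_of_mem (Finset.mem_univ q₀),
      Finset.card_univ, Nat.card_eq_fintype_card]
    exact Nat.sub_add_cancel Fintype.card_pos

theorem spanningTreeCosts_comp_sym2Map_subset {A B : Type*} (e : A ≃ B) (u : Sym2 B → ℝ) :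
    spanningTreeCosts (u ∘ Sym2.map e) ⊆ spanningTreeCosts u := by
  rintro _ ⟨T, hdiag, hconn, hcard, rfl⟩
  refine ⟨T.map e.toEmbedding.sym2Map, ?_, ?_, ?_, by rw [Finset.sum_map]; rfl⟩
  · simpa [Function.Embedding.sym2Map, Sym2.isDiag_map e.injective] using hdiag
  · let φ : fromEdgeSet (↑T : Set (Sym2 A)) →g
        fromEdgeSet (↑(T.map e.toEmbedding.sym2Map) : Set (Sym2 B)) :=
      ⟨e, fun {a b} hab => by
        rw [fromEdgeSet_adj] at hab ⊢
        exact ⟨Finset.mem_map_of_mem _ hab.1, e.injective.ne hab.2⟩⟩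
    exact hconn.map φ e.surjective
  · rw [Finset.card_map, hcard, Nat.card_congr e]

theorem mstCost_comp_sym2Map {A B : Type*} (e : A ≃ B) (u : Sym2 B → ℝ) :
    mstCost (u ∘ Sym2.map e) = mstCost u := by
  have hinv : (u ∘ Sym2.map e) ∘ Sym2.map e.symm = u := by
    ext p
    simp [Sym2.map_map]
  rw [mstCost_eq_sInf, mstCost_eq_sInf]
  refine congrArg sInf (subset_antisymm (spanningTreeCosts_comp_sym2Map_subset e u) ?_)
  conv_lhs => rw [← hinv]
  exact spanningTreeCosts_comp_sym2Map_subset e.symm _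

theorem quotCost_bot {A : Type*} (d : Sym2 A → ℝ) :
    quotCost d ⊥ = d ∘ Sym2.map Setoid.quotientBotEquiv := by
  ext e
  induction e using Sym2.inductionOn with | hf q q' => ?_
  induction q using Quotient.inductionOn
  induction q' using Quotient.inductionOn
  rename_i a b
  suffices {v | ∃ a' b', s(⟦a'⟧, ⟦b'⟧) = s((⟦a⟧ : Quotient (⊥ : Setoid A)), ⟦b⟧) ∧
      v = d s(a', b')} = {d s(a, b)} by
    rw [quotCost, this, csInf_singleton]; rfl
  ext v
  constructor
  · rintro ⟨a', b', h, rfl⟩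
    exact congrArg d (congrArg (Sym2.map Setoid.quotientBotEquiv) h)
  · rintro rfl
    exact ⟨a, b, rfl, rfl⟩

theorem mstCost_quotCost_of_eq_bot {A : Type*} (d : Sym2 A → ℝ) {s : Setoid A} (hs : s = ⊥) :
    mstCost (quotCost d s) = mstCost d := by
  subst hs
  rw [quotCost_bot, mstCost_comp_sym2Map]

theorem exists_spanningTree_sum_lt_mstCost_add {Q : Type*} [Fintype Q] [Nonempty Q]
    (u : Sym2 Q → ℝ) {ε : ℝ} (hε : 0 < ε) :
    ∃ T : Finset (Sym2 Q), (fromEdgeSet (↑T : Set (Sym2 Q))).Connected ∧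
      ∑ e ∈ T, u e < mstCost u + ε := by
  obtain ⟨_, ⟨T, -, hT, -, rfl⟩, hlt⟩ :=
    exists_lt_of_csInf_lt (spanningTreeCosts_nonempty u) (lt_add_of_pos_right (mstCost u) hε)
  exact ⟨T, hT, hlt⟩

theorem exists_lt_quotCost_add {A : Type*} (d : Sym2 A → ℝ) (sd : Setoid A)
    (e : Sym2 (Quotient sd)) {ε : ℝ} (hε : 0 < ε) :
    ∃ a b : A, s(⟦a⟧, ⟦b⟧) = e ∧ d s(a, b) < quotCost d sd e + ε := by
  induction e using Sym2.inductionOn with | hf q q' => ?_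
  induction q using Quotient.inductionOn
  induction q' using Quotient.inductionOn
  rename_i a b
  obtain ⟨_, ⟨a', b', he, rfl⟩, hlt⟩ :=
    exists_lt_of_csInf_lt
      (s := {v | ∃ a' b' : A, s(⟦a'⟧, ⟦b'⟧) = s(⟦a⟧, ⟦b⟧) ∧ v = d s(a', b')})
      ⟨_, a, b, rfl, rfl⟩ (lt_add_of_pos_right (quotCost d sd s(⟦a⟧, ⟦b⟧)) hε)
  exact ⟨a', b', he, hlt⟩

theorem exists_walk_sum_lt_wdist_add {V : Type*} {G : SimpleGraph V} (hG : G.Connected)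
    (c : Sym2 V → ℝ) (x y : V) {ε : ℝ} (hε : 0 < ε) :
    ∃ p : G.Walk x y, (p.edges.map c).sum < wdist G c s(x, y) + ε := by
  obtain ⟨p⟩ := hG.preconnected x y
  obtain ⟨_, hp | ⟨p, rfl⟩, hlt⟩ := exists_lt_of_csInf_lt
    (s := {d | (∃ p : G.Walk x y, d = (p.edges.map c).sum) ∨
      (∃ p : G.Walk y x, d = (p.edges.map c).sum)})
    ⟨_, Or.inl ⟨p, rfl⟩⟩ (lt_add_of_pos_right (wdist G c s(x, y)) hε)
  · obtain ⟨p, rfl⟩ := hp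
    exact ⟨p, hlt⟩
  · refine ⟨p.reverse, ?_⟩
    rwa [Walk.edges_reverse, List.map_reverse, List.sum_reverse]

theorem exists_walk_sum_lt_quotCost_add {V : Type*} {G : SimpleGraph V} (hG : G.Connected)
    (c : Sym2 V → ℝ) {R : Finset V} (sd : Setoid R) (e : Sym2 (Quotient sd)) {ε : ℝ}
    (hε : 0 < ε) :
    ∃ (a b : R) (p : G.Walk a b), s(⟦a⟧, ⟦b⟧) = e ∧
      (p.edges.map c).sum < quotCost (restrictDist G c R) sd e + ε := by
  obtain ⟨a, b, he, hab⟩ := exists_lt_quotCost_add (restrictDist G c R) sd e (half_pos hε)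
  obtain ⟨p, hp⟩ := exists_walk_sum_lt_wdist_add hG c a b (half_pos hε)
  change wdist G c s(↑a, ↑b) < _ at hab
  exact ⟨a, b, p, he, by linarith⟩

theorem connCost_le_sum {V : Type*} {G : SimpleGraph V} {c : Sym2 V → ℝ}
    (hc : ∀ e ∈ G.edgeSet, 0 ≤ c e) {X : Set V} {K : Finset (Sym2 V)}
    (hKG : (↑K : Set (Sym2 V)) ⊆ G.edgeSet) (hKX : ConnectsSet (↑K : Set (Sym2 V)) X) :
    connCost G c X ≤ ∑ e ∈ K, c e :=
  csInf_le ⟨0, by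
    rintro _ ⟨K', hK', -, rfl⟩
    exact Finset.sum_nonneg fun e he => hc e (hK' he)⟩ ⟨K, hKG, hKX, rfl⟩

theorem connectsSet_union_of_connected_quotient {V : Type*} {G : SimpleGraph V} {R : Finset V}
    {sd : Setoid R} {KS : Finset (Sym2 V)}
    (hsd : sd ≤ (fromEdgeSet (↑KS : Set (Sym2 V))).reachableSetoid.comap Subtype.val)
    {T : Finset (Sym2 (Quotient sd))}
    (hT : (fromEdgeSet (↑T : Set (Sym2 (Quotient sd)))).Connected)
    {A B : Sym2 (Quotient sd) → R} (P : ∀ e, G.Walk (A e) (B e))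
    (hAB : ∀ e, s(⟦A e⟧, ⟦B e⟧) = e) :
    ConnectsSet (↑(KS ∪ T.biUnion fun e => (P e).edges.toFinset) : Set (Sym2 V)) ↑R := by
  set KU := KS ∪ T.biUnion fun e => (P e).edges.toFinset
  let r : Setoid R := (fromEdgeSet (↑KU : Set (Sym2 V))).reachableSetoid.comap Subtype.val
  have hsdr : sd ≤ r := fun a b hab =>
    (hsd hab).mono (fromEdgeSet_mono (Finset.coe_subset.2 Finset.subset_union_left))
  refine fun x hx y hy => Setoid.rel_of_connected_quotient hsdr hT ?_ ⟨x, hx⟩ ⟨y, hy⟩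
  intro e he
  rw [edgeSet_fromEdgeSet] at he
  refine ⟨A e, B e, hAB e, reachable_fromEdgeSet_of_walk (P e) fun x hx => ?_⟩
  exact Finset.mem_union_right _ (Finset.mem_biUnion.2 ⟨e, he.1, List.mem_toFinset.2 hx⟩)

theorem connCost_le_mstCost_quotCost_add {V : Type*} {G : SimpleGraph V} (hG : G.Connected)
    {c : Sym2 V → ℝ} (hc : ∀ e ∈ G.edgeSet, 0 ≤ c e) {R : Finset V} (hR : R.Nonempty)
    (sd : Setoid R) {KS : Finset (Sym2 V)} (hKS : (↑KS : Set (Sym2 V)) ⊆ G.edgeSet)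
    (hsd : sd ≤ (fromEdgeSet (↑KS : Set (Sym2 V))).reachableSetoid.comap Subtype.val) :
    connCost G c ↑R ≤ mstCost (quotCost (restrictDist G c R) sd) + ∑ e ∈ KS, c e := by
  have : Nonempty (Quotient sd) := ⟨⟦⟨_, hR.choose_spec⟩⟧⟩
  refine le_of_forall_pos_lt_add fun ε hε => ?_
  obtain ⟨T, hTconn, hTsum⟩ :=
    exists_spanningTree_sum_lt_mstCost_add (quotCost (restrictDist G c R) sd) (half_pos hε)
  set δ := ε / 2 / (T.card + 1) with hδ_def
  have hδ : 0 < δ := by positivity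
  choose A B P hAB hP using fun e => exists_walk_sum_lt_quotCost_add hG c sd e hδ
  set KU := KS ∪ T.biUnion fun e => (P e).edges.toFinset
  have hKU : (↑KU : Set (Sym2 V)) ⊆ G.edgeSet := by
    simp only [KU, Finset.coe_union, Finset.coe_biUnion, Set.union_subset_iff,
      Set.iUnion_subset_iff]
    exact ⟨hKS, fun e _ x hx => (P e).edges_subset_edgeSet (List.mem_toFinset.1 hx)⟩
  have hconn : ConnectsSet (↑KU : Set (Sym2 V)) ↑R :=
    connectsSet_union_of_connected_quotient hsd hTconn P hAB
  have hc' : ∀ x ∈ KU, 0 ≤ c x := fun x hx => hc x (hKU hx)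
  have hδT : (T.card : ℝ) * δ < ε / 2 := by
    rw [hδ_def, mul_div_assoc', div_lt_iff₀ (by positivity)]
    nlinarith
  calc connCost G c ↑R ≤ ∑ e ∈ KU, c e := connCost_le_sum hc hKU hconn
    _ ≤ ∑ e ∈ KS, c e + ∑ e ∈ T, ∑ x ∈ (P e).edges.toFinset, c x := by
      grw [Finset.sum_union_le_sum_add_sum fun x hx =>
          hc' x (Finset.mem_union_left _ (Finset.mem_inter.1 hx).1),
        Finset.sum_biUnion_le_sum_sum fun x hx => hc' x (Finset.mem_union_right _ hx)]
    _ ≤ ∑ e ∈ KS, c e + ∑ e ∈ T, (quotCost (restrictDist G c R) sd e + δ) := by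
      gcongr with e he
      exact (List.sum_toFinset_le_sum_map fun x hx =>
        hc x ((P e).edges_subset_edgeSet hx)).trans (hP e).le
    _ < mstCost (quotCost (restrictDist G c R) sd) + ∑ e ∈ KS, c e + ε := by
      rw [Finset.sum_add_distrib, Finset.sum_const, nsmul_eq_mul]
      linarith

theorem sum_stageDrop_eq {V : Type*} (G : SimpleGraph V) (c : Sym2 V → ℝ) (R : Finset V)
    {j : ℕ} (X : Fin j → Set R) (sd : Fin (j + 1) → Setoid R) (hs0 : sd 0 = ⊥)
    (hsucc : ∀ i : Fin j, sd i.succ = sd i.castSucc ⊔ contractSetoid (X i)) :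
    ∑ i, stageDrop G c R (sd i.castSucc) (X i) =
      mstCost (restrictDist G c R) - mstCost (quotCost (restrictDist G c R) (sd (Fin.last j))) := by
  let f k := mstCost (quotCost (restrictDist G c R) (sd k))
  have hstep : ∀ i : Fin j, stageDrop G c R (sd i.castSucc) (X i) = f i.castSucc - f i.succ :=
    fun i => by rw [stageDrop, ← hsucc]
  rw [Finset.sum_congr rfl fun i _ => hstep i, Fin.sum_univ_castSucc_sub_succ]
  exact congrArg (· - f (Fin.last j)) (mstCost_quotCost_of_eq_bot _ hs0)

open MeasureTheory Set in
theorem integral_indicator_Iio_const {a t : ℝ} (ha : 0 ≤ a) (ht : 0 ≤ t) (C : ℝ) :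
    ∫ γ in (0 : ℝ)..a, (Iio t).indicator (fun _ => C) γ = min t a * C := by
  rw [intervalIntegral.integral_of_le ha, integral_indicator_const C measurableSet_Iio,
    measureReal_restrict_apply measurableSet_Iio,
    measureReal_congr ((Iio_ae_eq_Iic (μ := volume)).inter (ae_eq_refl (Ioc 0 a))), inter_comm,
    Ioc_inter_Iic, Real.volume_real_Ioc_of_le (le_min ha ht), smul_eq_mul, sub_zero, min_comm]

open MeasureTheory Set in
theorem integral_sum_filter_lt {ι : Type*} [Fintype ι] {t : ι → ℝ} (ht : ∀ i, 0 ≤ t i)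
    (w : ι → ℝ) {a : ℝ} (ha : 0 ≤ a) :
    ∫ γ in (0 : ℝ)..a, ∑ i ∈ Finset.univ.filter (fun i => γ < t i), w i =
      ∑ i, min (t i) a * w i := by
  have hind : ∀ γ, ∑ i ∈ Finset.univ.filter (fun i => γ < t i), w i =
      ∑ i, (Iio (t i)).indicator (fun _ => w i) γ := by
    intro γ
    simp [Finset.sum_filter, indicator_apply]
  simp_rw [hind]
  rw [intervalIntegral.integral_finsetSum fun i _ =>
    intervalIntegrable_iff.2 ((integrableOn_const (by simp)).indicator measurableSet_Iio)]
  exact Finset.sum_congr rfl fun i _ => integral_indicator_Iio_const ha (ht i) (w i)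

theorem le_mul_one_sub_integral {ι : Type*} [Fintype ι] {L M : ℝ} {r d : ι → ℝ}
    (hr : ∀ i, r i ≤ 1) (hd : ∀ i, 0 ≤ d i) (hL : L ≤ M - ∑ i, (1 - r i) * d i) :
    L ≤ M * (1 - ∫ γ in (0 : ℝ)..(1 / 2),
      (∑ i ∈ Finset.univ.filter (fun i => r i < 1 - γ), d i) / M) := by
  simp_rw [lt_sub_comm (a := r _)]
  rw [intervalIntegral.integral_div,
    integral_sum_filter_lt (fun i => sub_nonneg.2 (hr i)) d (by norm_num)]
  have hmin : ∑ i, min (1 - r i) (1 / 2) * d i ≤ ∑ i, (1 - r i) * d i :=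
    Finset.sum_le_sum fun i _ => mul_le_mul_of_nonneg_right (min_le_left _ _) (hd i)
  have hmin_nonneg : 0 ≤ ∑ i, min (1 - r i) (1 / 2) * d i :=
    Finset.sum_nonneg fun i _ => mul_nonneg (le_min (sub_nonneg.2 (hr i)) (by norm_num)) (hd i)
  rcases eq_or_ne M 0 with rfl | hM
  · simp only [div_zero, sub_zero, mul_one]
    linarith
  · rw [mul_sub, mul_one, mul_div_cancel₀ _ hM]
    linarith

theorem greedy_opt_bound_general {V : Type*}
    (G : SimpleGraph V) (hG : G.Connected)
    (c : Sym2 V → ℝ) (hc : ∀ e ∈ G.edgeSet, 0 < c e)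
    (R : Finset V) (hR : R.Nonempty)
    (j : ℕ)
    (X : Fin j → Set {v : V // v ∈ R}) (K : Fin j → Finset (Sym2 V))
    (sd : Fin (j + 1) → Setoid {v : V // v ∈ R})
    (hs0 : sd 0 = ⊥)
    (hsucc : ∀ i : Fin j, sd i.succ = sd i.castSucc ⊔ contractSetoid (X i))
    (hKE : ∀ i : Fin j, (↑(K i) : Set (Sym2 V)) ⊆ G.edgeSet)
    (hconn : ∀ i : Fin j, ConnectsSet (↑(K i) : Set (Sym2 V)) (Subtype.val '' X i))
    (hdpos : ∀ i : Fin j, 0 < stageDrop G c R (sd i.castSucc) (X i))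
    (hub : ∀ i : Fin j, stageRatio G c R (sd i.castSucc) (K i) (X i) < 1) :
    connCost G c (↑R : Set V) ≤
      mstCost (restrictDist G c R) *
        (1 - ∫ γ in (0 : ℝ)..(1 / 2),
          (∑ i ∈ Finset.univ.filter
              (fun i : Fin j => stageRatio G c R (sd i.castSucc) (K i) (X i) < 1 - γ),
            stageDrop G c R (sd i.castSucc) (X i)) / mstCost (restrictDist G c R)) := by
  have hdrops := sum_stageDrop_eq G c R X sd hs0 hsucc
  set r := fun i => stageRatio G c R (sd i.castSucc) (K i) (X i)
  set d := fun i => stageDrop G c R (sd i.castSucc) (X i)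
  set KS := Finset.univ.biUnion K
  have hc' : ∀ e ∈ G.edgeSet, 0 ≤ c e := fun e he => (hc e he).le
  have hKS : (↑KS : Set (Sym2 V)) ⊆ G.edgeSet := by
    simpa [KS, Set.iUnion_subset_iff] using hKE
  have hsd :
      sd (Fin.last j) ≤ (fromEdgeSet (↑KS : Set (Sym2 V))).reachableSetoid.comap Subtype.val :=
    le_of_contractSetoid_chain hs0 hsucc (fun i a ha b hb =>
      (hconn i a ⟨a, ha, rfl⟩ b ⟨b, hb, rfl⟩).mono (fromEdgeSet_mono
        (Finset.coe_subset.2 (Finset.subset_biUnion_of_mem K (Finset.mem_univ i))))) _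
  have hcostK : ∑ e ∈ KS, c e ≤ ∑ i, r i * d i :=
    (Finset.sum_biUnion_le_sum_sum fun e he => hc' e (hKS he)).trans_eq
      (Finset.sum_congr rfl fun i _ => (div_mul_cancel₀ _ (hdpos i).ne').symm)
  have hopt := connCost_le_mstCost_quotCost_add hG hc' hR _ hKS hsd
  exact le_mul_one_sub_integral (fun i => (hub i).le) (fun i => (hdpos i).le)
    (by simp only [sub_mul, one_mul, Finset.sum_sub_distrib]; linarith)

/-- In the relative greedy analysis,
`OPT ≤ TMST · (1 - ∫_0^{1/2} ρ(γ) dγ)`, where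
`ρ(γ) = (1/TMST) · Σ_{i ≤ j(γ)} drop_{G_i}(X_i)` and `j(γ)` is the last index with
ratio `< 1 - γ` (equivalently, since the ratios are non-decreasing, the sum extends over
all `i` with `c(K_i)/drop_{G_i}(X_i) < 1 - γ`), and `OPT` is the cost of an optimal
Steiner tree. -/
theorem greedy_opt_bound {V : Type*} [Fintype V] [DecidableEq V]
    (G : SimpleGraph V) (hG : G.Connected)
    (c : Sym2 V → ℝ) (hc : ∀ e ∈ G.edgeSet, 0 < c e)
    (R : Finset V) (hR : R.Nonempty)
    (j : ℕ)
    (X : Fin j → Set {v : V // v ∈ R}) (K : Fin j → Finset (Sym2 V))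
    (sd : Fin (j + 1) → Setoid {v : V // v ∈ R})
    (hs0 : sd 0 = ⊥)
    (hsucc : ∀ i : Fin j, sd i.succ = sd i.castSucc ⊔ contractSetoid (X i))
    (hKE : ∀ i : Fin j, (↑(K i) : Set (Sym2 V)) ⊆ G.edgeSet)
    (hconn : ∀ i : Fin j, ConnectsSet (↑(K i) : Set (Sym2 V)) (Subtype.val '' X i))
    (hdpos : ∀ i : Fin j, 0 < stageDrop G c R (sd i.castSucc) (X i))
    (hlb : ∀ i : Fin j, 1 / 2 ≤ stageRatio G c R (sd i.castSucc) (K i) (X i))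
    (hub : ∀ i : Fin j, stageRatio G c R (sd i.castSucc) (K i) (X i) < 1)
    (hmono : ∀ i i' : Fin j, i ≤ i' →
      stageRatio G c R (sd i.castSucc) (K i) (X i) ≤
        stageRatio G c R (sd i'.castSucc) (K i') (X i')) :
    connCost G c (↑R : Set V) ≤
      mstCost (restrictDist G c R) *
        (1 - ∫ γ in (0 : ℝ)..(1 / 2),
          (∑ i ∈ Finset.univ.filter
              (fun i : Fin j => stageRatio G c R (sd i.castSucc) (K i) (X i) < 1 - γ),
            stageDrop G c R (sd i.castSucc) (X i)) / mstCost (restrictDist G c R)) :=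
  greedy_opt_bound_general G hG c hc R hR j X K sd hs0 hsucc hKE hconn hdpos hub
end

section
/- In the complete graph on a terminal set R, every linear program of the form of the dual of the Hypergraphic Relaxation admits an optimal solution whose support is a laminar family: if y is feasible for the constraints Σ_{S : (X,v) ∈ δ⁺(S)} y_S ≤ cost(X) for all pairs (X,v) with v ∈ X ⊆ R, and y ≥ 0, then there exists an optimal y* (maximizing Σ_S y*_S) such that any two sets in the support of y* are nested or disjoint. -/
/-!
Among all optimal solutions (a compact set) pick one maximizing `∑ y_S |S|²`. If two sets
`S₁, S₂` of its support cross, shift `ε = min (y S₁) (y S₂)` from `S₁, S₂` to `S₁ ∩ S₂, S₁ ∪ S₂`.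
Every hyperarc leaving `S₁ ∩ S₂` or `S₁ ∪ S₂` leaves `S₁` or `S₂`, and one leaving both leaves
both, so no constraint gets tighter and the objective is unchanged; but
`|S₁ ∪ S₂|² + |S₁ ∩ S₂|² > |S₁|² + |S₂|²`, contradicting the choice.
-/

/-- Feasibility for the dual of the Hypergraphic Relaxation: `y` is nonnegative,
supported on nonempty sets not containing the root `r`, and satisfies
`Σ_{S : (X,v) ∈ δ⁺(S)} y_S ≤ cost X` for every pair `(X, v)` with `v ∈ X ⊆ R`. -/
def HypDualFeasible {R : Type*} [Fintype R] [DecidableEq R]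
    (r : R) (cost : Finset R → ℝ) (y : Finset R → ℝ) : Prop :=
  (∀ S : Finset R, 0 ≤ y S) ∧
  (∀ S : Finset R, ¬(S.Nonempty ∧ r ∉ S) → y S = 0) ∧
  (∀ X : Finset R, ∀ v ∈ X,
    (∑ S ∈ Finset.univ.filter
        (fun S : Finset R => (X ∩ S).Nonempty ∧ v ∉ S), y S) ≤ cost X)

open Finset

theorem IsCompact.exists_isMaxOn_lex {α : Type*} [TopologicalSpace α] {K : Set α}
    (hK : IsCompact K) (hne : K.Nonempty) {f g : α → ℝ} (hf : Continuous f)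
    (hg : ContinuousOn g K) :
    ∃ w ∈ K, IsMaxOn f K w ∧ IsMaxOn g (K ∩ {z | f z = f w}) w := by
  obtain ⟨w₀, hw₀, hfmax⟩ := hK.exists_isMaxOn hne hf.continuousOn
  obtain ⟨w, ⟨hw, hfw⟩, hgmax⟩ := (hK.inter_right (isClosed_eq hf continuous_const)).exists_isMaxOn
    ⟨w₀, hw₀, rfl⟩ (hg.mono Set.inter_subset_left)
  exact ⟨w, hw, fun z hz => hfw.symm ▸ hfmax hz, by rwa [hfw]⟩

section Uncrossing

variable {R : Type*} [DecidableEq R]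

/-- `(X, v) ∈ δ⁺(S)`. -/
def HyperarcLeaves (X : Finset R) (v : R) (S : Finset R) : Prop :=
  (X ∩ S).Nonempty ∧ v ∉ S

variable {X : Finset R} {v : R} {S₁ S₂ : Finset R}

theorem HyperarcLeaves.of_inter (h : HyperarcLeaves X v (S₁ ∩ S₂)) :
    HyperarcLeaves X v S₁ ∨ HyperarcLeaves X v S₂ := by
  obtain ⟨hX, hv⟩ := h
  by_cases hv₁ : v ∈ S₁
  · exact Or.inr ⟨hX.mono (inter_subset_inter_left inter_subset_right),
      fun hv₂ => hv (mem_inter.2 ⟨hv₁, hv₂⟩)⟩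
  · exact Or.inl ⟨hX.mono (inter_subset_inter_left inter_subset_left), hv₁⟩

theorem HyperarcLeaves.of_union (h : HyperarcLeaves X v (S₁ ∪ S₂)) :
    HyperarcLeaves X v S₁ ∨ HyperarcLeaves X v S₂ := by
  obtain ⟨⟨x, hx⟩, hv⟩ := h
  rw [mem_inter, mem_union] at hx
  rw [mem_union, not_or] at hv
  exact hx.2.imp (fun h₁ => ⟨⟨x, mem_inter.2 ⟨hx.1, h₁⟩⟩, hv.1⟩)
    (fun h₂ => ⟨⟨x, mem_inter.2 ⟨hx.1, h₂⟩⟩, hv.2⟩)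

theorem HyperarcLeaves.of_inter_of_union (hI : HyperarcLeaves X v (S₁ ∩ S₂))
    (hU : HyperarcLeaves X v (S₁ ∪ S₂)) :
    HyperarcLeaves X v S₁ ∧ HyperarcLeaves X v S₂ := by
  rw [HyperarcLeaves, mem_union, not_or] at hU
  exact ⟨⟨hI.1.mono (inter_subset_inter_left inter_subset_left), hU.2.1⟩,
    ⟨hI.1.mono (inter_subset_inter_left inter_subset_right), hU.2.2⟩⟩

theorem card_sq_add_card_sq_lt (h₁ : ¬S₁ ⊆ S₂) (h₂ : ¬S₂ ⊆ S₁) :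
    #S₁ ^ 2 + #S₂ ^ 2 < #(S₁ ∪ S₂) ^ 2 + #(S₁ ∩ S₂) ^ 2 := by
  have hU := card_union_add_card_inter S₁ S₂
  have hlt₁ : #S₁ < #(S₁ ∪ S₂) := card_lt_card (left_lt_sup.2 h₂)
  have hlt₂ : #S₂ < #(S₁ ∪ S₂) := card_lt_card (right_lt_sup.2 h₁)
  nlinarith

def uncrossing (S₁ S₂ : Finset R) : Finset R → ℝ :=
  Pi.single (S₁ ∩ S₂) 1 + Pi.single (S₁ ∪ S₂) 1 - Pi.single S₁ 1 - Pi.single S₂ 1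

theorem uncrossing_nonneg {S : Finset R} (h₁ : S ≠ S₁) (h₂ : S ≠ S₂) :
    0 ≤ uncrossing S₁ S₂ S := by
  simp only [uncrossing, Pi.add_apply, Pi.sub_apply, Pi.single_apply, if_neg h₁, if_neg h₂]
  split_ifs <;> norm_num

theorem neg_one_le_uncrossing (hne : S₁ ≠ S₂) (S : Finset R) : -1 ≤ uncrossing S₁ S₂ S := by
  simp only [uncrossing, Pi.add_apply, Pi.sub_apply, Pi.single_apply]
  split_ifs <;> norm_num
  exact hne (‹S = S₁›.symm.trans ‹S = S₂›)

theorem sum_uncrossing (F : Finset (Finset R)) :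
    ∑ S ∈ F, uncrossing S₁ S₂ S = (if S₁ ∩ S₂ ∈ F then 1 else 0) +
      (if S₁ ∪ S₂ ∈ F then 1 else 0) - (if S₁ ∈ F then 1 else 0) - (if S₂ ∈ F then 1 else 0) := by
  simp [uncrossing, sum_add_distrib, sum_sub_distrib]

theorem sum_uncrossing_nonpos (F : Finset (Finset R))
    (hI : S₁ ∩ S₂ ∈ F → S₁ ∈ F ∨ S₂ ∈ F) (hU : S₁ ∪ S₂ ∈ F → S₁ ∈ F ∨ S₂ ∈ F)
    (hIU : S₁ ∩ S₂ ∈ F → S₁ ∪ S₂ ∈ F → S₁ ∈ F ∧ S₂ ∈ F) :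
    ∑ S ∈ F, uncrossing S₁ S₂ S ≤ 0 := by
  rw [sum_uncrossing]
  split_ifs <;> simp_all

theorem sum_uncrossing_mul [Fintype R] (f : Finset R → ℝ) :
    ∑ S, uncrossing S₁ S₂ S * f S = f (S₁ ∩ S₂) + f (S₁ ∪ S₂) - f S₁ - f S₂ := by
  simp [uncrossing, sum_add_distrib, sum_sub_distrib, add_mul, sub_mul, Pi.single_apply]

end Uncrossing

section HypDual

variable {R : Type*} [Fintype R] [DecidableEq R] {r : R} {cost : Finset R → ℝ}
  {y w : Finset R → ℝ} {S S₁ S₂ : Finset R}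

theorem hypDualFeasible_zero (hcost : ∀ X, 0 ≤ cost X) : HypDualFeasible r cost 0 :=
  ⟨fun _ => le_rfl, fun _ _ => rfl, fun X _ _ => by simpa using hcost X⟩

namespace HypDualFeasible

theorem nonempty_and_notMem_of_pos (hy : HypDualFeasible r cost y) (hS : 0 < y S) :
    S.Nonempty ∧ r ∉ S := by
  by_contra h
  exact hS.ne' (hy.2.1 S h)

theorem le_cost_insert (hy : HypDualFeasible r cost y) (hS : S.Nonempty) (hr : r ∉ S) :
    y S ≤ cost (insert r S) := by
  refine le_trans (single_le_sum (fun T _ => hy.1 T) ?_) (hy.2.2 _ r (mem_insert_self r S))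
  obtain ⟨x, hx⟩ := hS
  exact mem_filter.2 ⟨mem_univ _, ⟨x, mem_inter.2 ⟨mem_insert_of_mem hx, hx⟩⟩, hr⟩

theorem add_smul_uncrossing (hy : HypDualFeasible r cost y) {ε : ℝ} (hε : 0 < ε)
    (h₁ : ε ≤ y S₁) (h₂ : ε ≤ y S₂) (hne : S₁ ≠ S₂) (hI : (S₁ ∩ S₂).Nonempty) :
    HypDualFeasible r cost (y + ε • uncrossing S₁ S₂) := by
  obtain ⟨hS₁, hr₁⟩ := hy.nonempty_and_notMem_of_pos (hε.trans_le h₁)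
  obtain ⟨hS₂, hr₂⟩ := hy.nonempty_and_notMem_of_pos (hε.trans_le h₂)
  refine ⟨fun S => ?_, fun S hS => ?_, fun X v hv => ?_⟩
  · simp only [Pi.add_apply, Pi.smul_apply, smul_eq_mul]
    have hd := neg_one_le_uncrossing hne S
    by_cases hS : S = S₁ ∨ S = S₂
    · rcases hS with rfl | rfl <;> nlinarith
    · push Not at hS
      nlinarith [hy.1 S, uncrossing_nonneg hS.1 hS.2]
  · have : S ≠ S₁ ∩ S₂ ∧ S ≠ S₁ ∪ S₂ ∧ S ≠ S₁ ∧ S ≠ S₂ := by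
      refine ⟨?_, ?_, ?_, ?_⟩ <;> rintro rfl <;> simp_all
    simp [uncrossing, this, hy.2.1 S hS]
  · have hcut := sum_uncrossing_nonpos (S₁ := S₁) (S₂ := S₂)
      (univ.filter fun S => (X ∩ S).Nonempty ∧ v ∉ S) ?_ ?_ ?_
    · simp only [Pi.add_apply, Pi.smul_apply, smul_eq_mul, sum_add_distrib, ← mul_sum]
      nlinarith [hy.2.2 X v hv]
    all_goals simp only [mem_filter, mem_univ, true_and]
    exacts [HyperarcLeaves.of_inter, HyperarcLeaves.of_union, HyperarcLeaves.of_inter_of_union]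

theorem laminar_of_isMaxOn (hw : HypDualFeasible r cost w)
    (hmax : IsMaxOn (fun z => ∑ S, z S * (#S : ℝ) ^ 2)
      ({z | HypDualFeasible r cost z} ∩ {z | ∑ S, z S = ∑ S, w S}) w)
    (h₁ : 0 < w S₁) (h₂ : 0 < w S₂) : S₁ ⊆ S₂ ∨ S₂ ⊆ S₁ ∨ S₁ ∩ S₂ = ∅ := by
  by_contra! h
  obtain ⟨h₁₂, h₂₁, hI⟩ := h
  have hne : S₁ ≠ S₂ := by rintro rfl; exact h₁₂ subset_rfl
  set ε := min (w S₁) (w S₂)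
  have hz := hw.add_smul_uncrossing (lt_min h₁ h₂) (min_le_left _ _) (min_le_right _ _) hne hI
  have hsum : ∑ S, (w + ε • uncrossing S₁ S₂) S = ∑ S, w S := by
    simp [sum_add_distrib, ← mul_sum, sum_uncrossing]
  have hgain : ∑ S, w S * (#S : ℝ) ^ 2 < ∑ S, (w + ε • uncrossing S₁ S₂) S * (#S : ℝ) ^ 2 := by
    simp only [Pi.add_apply, Pi.smul_apply, smul_eq_mul, add_mul, sum_add_distrib, mul_assoc,
      ← mul_sum, sum_uncrossing_mul]
    have hcard : ((#S₁ : ℝ) ^ 2 + (#S₂ : ℝ) ^ 2 < (#(S₁ ∪ S₂) : ℝ) ^ 2 + (#(S₁ ∩ S₂) : ℝ) ^ 2) := by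
      exact_mod_cast card_sq_add_card_sq_lt h₁₂ h₂₁
    nlinarith [lt_min h₁ h₂]
  exact (hmax ⟨hz, hsum⟩).not_gt hgain

end HypDualFeasible

theorem isClosed_setOf_hypDualFeasible : IsClosed {y | HypDualFeasible r cost y} := by
  simp only [HypDualFeasible, Set.ofPred_and, Set.ofPred_forall]
  refine (isClosed_iInter fun S => isClosed_le continuous_const (continuous_apply S)).inter
    ((isClosed_iInter fun S => isClosed_iInter fun _ =>
      isClosed_eq (continuous_apply S) continuous_const).inter
    (isClosed_iInter fun X => isClosed_iInter fun v => isClosed_iInter fun _ =>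
      isClosed_le (by fun_prop) continuous_const))

theorem isCompact_setOf_hypDualFeasible : IsCompact {y | HypDualFeasible r cost y} := by
  refine (isCompact_univ_pi fun S => isCompact_Icc (a := 0) (b := |cost (insert r S)|))
    |>.of_isClosed_subset isClosed_setOf_hypDualFeasible fun y hy S _ => ⟨hy.1 S, ?_⟩
  by_cases hS : S.Nonempty ∧ r ∉ S
  · exact (hy.le_cost_insert hS.1 hS.2).trans (le_abs_self _)
  · exact (hy.2.1 S hS).trans_le (abs_nonneg _)

end HypDual

/-- The dual of the Hypergraphic Relaxation admits an optimal
solution whose support is a laminar family: any two sets in the support are nested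
or disjoint. -/
theorem hypergraphic_dual_laminar_optimum {R : Type*} [Fintype R] [DecidableEq R]
    (r : R) (cost : Finset R → ℝ) (hcost : ∀ X, 0 ≤ cost X) :
    ∃ y : Finset R → ℝ,
      HypDualFeasible r cost y ∧
      (∀ y' : Finset R → ℝ, HypDualFeasible r cost y' →
        (∑ S : Finset R, y' S) ≤ (∑ S : Finset R, y S)) ∧
      (∀ S1 S2 : Finset R, 0 < y S1 → 0 < y S2 →
        S1 ⊆ S2 ∨ S2 ⊆ S1 ∨ S1 ∩ S2 = ∅) := by
  obtain ⟨w, hw, hopt, hmaxCard⟩ := isCompact_setOf_hypDualFeasible.exists_isMaxOn_lex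
    ⟨0, hypDualFeasible_zero hcost⟩ (f := fun y => ∑ S, y S)
    (g := fun y => ∑ S, y S * (#S : ℝ) ^ 2) (by fun_prop) (by fun_prop)
  exact ⟨w, hw, fun y' hy' => hopt hy', fun S₁ S₂ => hw.laminar_of_isMaxOn hmaxCard⟩
end

section
/- Along the suffix of a safe path after the meeting point, the traveled distance is bounded by a telescoping argument: let P be a directed path with vertices m = v_0, v_1, …, v_k = v, and suppose there are functions t_S, t_R : {v_0,…,v_k} → ℝ (arrival times of a set S and of all terminals) with t_S(v_0) = t_R(v_0), such that each edge e_i = (v_{i-1}, v_i) satisfies c(e_i) ≤ (t_S(v_i) − t_S(v_{i-1})) + max{t_R(v_i) − t_R(v_{i-1}), 0} and c(e_i) ≥ |t_R(v_i) − t_R(v_{i-1})|. Then the total length satisfies c(P) ≤ 2·t_S(v) + t_R(v) − 3·t_S(m). -/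
/-! Per edge, the two bounds combine to `c ≤ 2 ΔtS + ΔtR`: if `ΔtR ≥ 0` add `ΔtR ≤ c` to
`c ≤ ΔtS + ΔtR`, otherwise add `-ΔtR ≤ c` to `c ≤ ΔtS`. Summing over the path, both right-hand
sides telescope, and `tS m = tR m` turns `tR v - tR m` into `tR v - tS m`. -/

theorem Fin.sum_succ_sub_castSucc {M : Type*} [AddCommGroup M] {k : ℕ} (f : Fin (k + 1) → M) :
    ∑ i : Fin k, (f i.succ - f i.castSucc) = f (Fin.last k) - f 0 := by
  rw [Finset.sum_sub_distrib, sub_eq_sub_iff_add_eq_add, add_comm _ (f 0), ← Fin.sum_univ_succ,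
    Fin.sum_univ_castSucc, add_comm (f (Fin.last k))]

theorem le_two_mul_add_of_le_add_max_zero_of_abs_le {α : Type*} [Field α] [LinearOrder α]
    [IsStrictOrderedRing α] {a b c : α} (hub : c ≤ a + max b 0) (hlb : |b| ≤ c) :
    c ≤ 2 * a + b := by
  rcases le_total b 0 with hb | hb
  · rw [max_eq_right hb] at hub
    linarith [neg_abs_le b]
  · rw [max_eq_left hb] at hub
    linarith [le_abs_self b]

theorem safe_path_telescoping_general {k : ℕ}
    (tS tR : Fin (k + 1) → ℝ) (c : Fin k → ℝ)
    (h0 : tS 0 = tR 0)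
    (hub : ∀ i : Fin k,
      c i ≤ (tS i.succ - tS i.castSucc) + max (tR i.succ - tR i.castSucc) 0)
    (hlb : ∀ i : Fin k, |tR i.succ - tR i.castSucc| ≤ c i) :
    ∑ i : Fin k, c i ≤ 2 * tS (Fin.last k) + tR (Fin.last k) - 3 * tS 0 := by
  calc ∑ i : Fin k, c i
      ≤ ∑ i : Fin k, (2 * (tS i.succ - tS i.castSucc) + (tR i.succ - tR i.castSucc)) :=
        Finset.sum_le_sum fun i _ => le_two_mul_add_of_le_add_max_zero_of_abs_le (hub i) (hlb i)
    _ = 2 * (tS (Fin.last k) - tS 0) + (tR (Fin.last k) - tR 0) := by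
        rw [Finset.sum_add_distrib, ← Finset.mul_sum, Fin.sum_succ_sub_castSucc,
          Fin.sum_succ_sub_castSucc]
    _ = 2 * tS (Fin.last k) + tR (Fin.last k) - 3 * tS 0 := by rw [← h0]; ring

/-- Telescoping bound along the suffix of a safe path after the
meeting point: for vertices `m = v_0, v_1, …, v_k = v` with arrival-time functions
`tS, tR` satisfying `tS(m) = tR(m)`, and edge lengths `c` with
`c(e_i) ≤ ΔtS + max(ΔtR, 0)` and `|ΔtR| ≤ c(e_i)` on each edge, the total length
satisfies `c(P) ≤ 2·tS(v) + tR(v) - 3·tS(m)`. -/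
theorem safe_path_telescoping {k : ℕ}
    (tS tR : Fin (k + 1) → ℝ) (c : Fin k → ℝ)
    (hc : ∀ i, 0 ≤ c i)
    (h0 : tS 0 = tR 0)
    (hub : ∀ i : Fin k,
      c i ≤ (tS i.succ - tS i.castSucc) + max (tR i.succ - tR i.castSucc) 0)
    (hlb : ∀ i : Fin k, |tR i.succ - tR i.castSucc| ≤ c i) :
    ∑ i : Fin k, c i ≤ 2 * tS (Fin.last k) + tR (Fin.last k) - 3 * tS 0 :=
  safe_path_telescoping_general tS tR c h0 hub hlb
end

section
/- For the functions a(γ) = (7−5γ)/12 and b(γ) = (7−5γ)(3−7γ)/(12(9−7γ)) on [0, 1/5], one has ∫_0^{1/5} a(γ)/b(γ) dγ = ∫_0^{1/5} (9−7γ)/(3−7γ) dγ < 1, ∫_0^{1/5} 1/b(γ) dγ < ∞, and 2·(1 − ∫_0^{1/5} (a(γ) − 1/2)/b(γ) dγ) ≤ 1.898. -/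
/-- `a(γ) = (7 - 5γ)/12`. -/
noncomputable def aFun (γ : ℝ) : ℝ := (7 - 5 * γ) / 12

/-- `b(γ) = (7 - 5γ)(3 - 7γ)/(12(9 - 7γ))`. -/
noncomputable def bFun (γ : ℝ) : ℝ := (7 - 5 * γ) * (3 - 7 * γ) / (12 * (9 - 7 * γ))

/-!
On `[0, 1/5]` the quotient `a/b` simplifies to `(9 - 7γ)/(3 - 7γ)`, which increases to `19/4`, so
its integral is at most `19/20`. For the last claim, `(a - 1/2)/b` has the partial fraction
decomposition `1 - (12/17)/(7 - 5γ) - (24/17)/(3 - 7γ)`, whose integral is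
`1/5 - (12/85) log (7/6) - (24/119) log (15/8) ≈ 0.05146`. The logarithms are bounded by the first
terms of the series of `artanh` and by `log 2 < 0.6931471808`, with margin about `4 · 10⁻⁴`.
-/

open Real Set intervalIntegral

namespace Real

lemma log_seven_div_six_le : log (7 / 6) ≤ 13 / 84 := by
  -- `7/6 = (1 + x)/(1 - x)` for `x = 1/13`
  have h := log_div_le_sum_range_add (x := 1 / 13) (by norm_num) (by norm_num) 1
  norm_num at h
  linarith

lemma log_fifteen_div_eight_lt : log (15 / 8) < 0.6931471808 - 2 / 31 := by
  have h16 := le_log_one_add_of_nonneg (x := 1 / 15) (by norm_num)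
  norm_num at h16
  have hsplit : log (15 / 8) = log 2 - log (16 / 15) := by
    rw [← log_div (by norm_num) (by norm_num)]
    norm_num
  linarith [log_two_lt_d9]

end Real

lemma integral_inv_sub_mul {a b c d : ℝ} (hc : c ≠ 0)
    (h : (0 : ℝ) ∉ uIcc (d - c * b) (d - c * a)) :
    ∫ x in a..b, (d - c * x)⁻¹ = c⁻¹ * log ((d - c * a) / (d - c * b)) := by
  rw [integral_comp_sub_mul (fun x => x⁻¹) hc, integral_inv h, smul_eq_mul]

lemma intervalIntegrable_inv_sub_mul {a b c d : ℝ} (h : ∀ x ∈ uIcc a b, d - c * x ≠ 0) :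
    IntervalIntegrable (fun x => (d - c * x)⁻¹) MeasureTheory.volume a b :=
  intervalIntegrable_inv h (by fun_prop)

lemma aFun_div_bFun {γ : ℝ} (h7 : 7 - 5 * γ ≠ 0) (h9 : 9 - 7 * γ ≠ 0) :
    aFun γ / bFun γ = (9 - 7 * γ) / (3 - 7 * γ) := by
  unfold aFun bFun
  field_simp

lemma aFun_sub_half_div_bFun {γ : ℝ} (h7 : 7 - 5 * γ ≠ 0) (h3 : 3 - 7 * γ ≠ 0) :
    (aFun γ - 1 / 2) / bFun γ = 1 - 12 / 17 * (7 - 5 * γ)⁻¹ - 24 / 17 * (3 - 7 * γ)⁻¹ := by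
  unfold aFun bFun
  field_simp
  ring

lemma bFun_pos {γ : ℝ} (hγ : γ < 3 / 7) : 0 < bFun γ := by
  unfold bFun
  have : 0 < 3 - 7 * γ := by linarith
  have : 0 < 7 - 5 * γ := by linarith
  have : 0 < 9 - 7 * γ := by linarith
  positivity

lemma continuousOn_bFun : ContinuousOn bFun (Iio (9 / 7)) :=
  ContinuousOn.div (by fun_prop) (by fun_prop) fun γ (hγ : γ < 9 / 7) => by linarith

lemma lt_three_sevenths_of_mem_uIcc {γ : ℝ} (hγ : γ ∈ uIcc (0 : ℝ) (1 / 5)) : γ < 3 / 7 := by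
  rw [uIcc_of_le (by norm_num)] at hγ
  linarith [hγ.2]

lemma intervalIntegrable_one_div_bFun :
    IntervalIntegrable (fun γ => 1 / bFun γ) MeasureTheory.volume 0 (1 / 5) :=
  intervalIntegrable_one_div (fun γ hγ => (bFun_pos (lt_three_sevenths_of_mem_uIcc hγ)).ne')
    (continuousOn_bFun.mono fun γ hγ =>
      show γ < 9 / 7 by linarith [lt_three_sevenths_of_mem_uIcc hγ])

lemma integral_nine_sub_div_three_sub_lt_one :
    ∫ γ in (0 : ℝ)..(1 / 5), (9 - 7 * γ) / (3 - 7 * γ) < 1 := by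
  have hbound : ∀ γ ∈ Icc (0 : ℝ) (1 / 5), (9 - 7 * γ) / (3 - 7 * γ) ≤ 19 / 4 := by
    rintro γ ⟨-, hγ⟩
    rw [div_le_iff₀ (by linarith)]
    linarith
  have hcont : ContinuousOn (fun γ : ℝ => (9 - 7 * γ) / (3 - 7 * γ)) (uIcc 0 (1 / 5)) :=
    ContinuousOn.div (by fun_prop) (by fun_prop) fun γ hγ => by
      linarith [lt_three_sevenths_of_mem_uIcc hγ]
  calc ∫ γ in (0 : ℝ)..(1 / 5), (9 - 7 * γ) / (3 - 7 * γ)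
      ≤ ∫ _ in (0 : ℝ)..(1 / 5), (19 / 4 : ℝ) :=
        integral_mono_on (by norm_num) hcont.intervalIntegrable intervalIntegrable_const hbound
    _ < 1 := by norm_num

lemma integral_aFun_sub_half_div_bFun :
    ∫ γ in (0 : ℝ)..(1 / 5), (aFun γ - 1 / 2) / bFun γ =
      1 / 5 - 12 / 85 * log (7 / 6) - 24 / 119 * log (15 / 8) := by
  have hpos : ∀ γ ∈ uIcc (0 : ℝ) (1 / 5), 0 < 7 - 5 * γ ∧ 0 < 3 - 7 * γ := fun γ hγ => by
    have := lt_three_sevenths_of_mem_uIcc hγ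
    constructor <;> linarith
  have hint₇ := intervalIntegrable_inv_sub_mul fun γ hγ => (hpos γ hγ).1.ne'
  have hint₃ := intervalIntegrable_inv_sub_mul fun γ hγ => (hpos γ hγ).2.ne'
  rw [integral_congr (g := fun γ => 1 - 12 / 17 * (7 - 5 * γ)⁻¹ - 24 / 17 * (3 - 7 * γ)⁻¹)
    fun γ hγ => aFun_sub_half_div_bFun (hpos γ hγ).1.ne' (hpos γ hγ).2.ne']
  rw [integral_sub (intervalIntegrable_const.sub (hint₇.const_mul _)) (hint₃.const_mul _),
    integral_sub intervalIntegrable_const (hint₇.const_mul _), integral_const_mul,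
    integral_const_mul,
    integral_inv_sub_mul (by norm_num) (notMem_uIcc_of_lt (by norm_num) (by norm_num)),
    integral_inv_sub_mul (by norm_num) (notMem_uIcc_of_lt (by norm_num) (by norm_num))]
  norm_num
  ring

/-- The integrals arising in the `1.898` integrality-gap computation:
`∫_0^{1/5} a/b dγ = ∫_0^{1/5} (9-7γ)/(3-7γ) dγ < 1`, the function `1/b` is integrable on
`[0, 1/5]`, and `2·(1 - ∫_0^{1/5} (a - 1/2)/b dγ) ≤ 1.898`. -/
theorem integrality_gap_integrals :
    (∫ γ in (0 : ℝ)..(1 / 5), aFun γ / bFun γ) =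
      (∫ γ in (0 : ℝ)..(1 / 5), (9 - 7 * γ) / (3 - 7 * γ)) ∧
    (∫ γ in (0 : ℝ)..(1 / 5), (9 - 7 * γ) / (3 - 7 * γ)) < 1 ∧
    IntervalIntegrable (fun γ => 1 / bFun γ) MeasureTheory.volume 0 (1 / 5) ∧
    2 * (1 - ∫ γ in (0 : ℝ)..(1 / 5), (aFun γ - 1 / 2) / bFun γ) ≤ 1.898 := by
  refine ⟨integral_congr fun γ hγ => ?_, integral_nine_sub_div_three_sub_lt_one,
    intervalIntegrable_one_div_bFun, ?_⟩
  · have := lt_three_sevenths_of_mem_uIcc hγ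
    exact aFun_div_bFun (by linarith) (by linarith)
  · rw [integral_aFun_sub_half_div_bFun]
    linarith [log_seven_div_six_le, log_fifteen_div_eight_lt]
end
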